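/- Let K be a quadratic number field with ring of integers O_K, let p ≥ 17 be a prime, and let (a, b, c) ∈ O_K³ be a non-trivial solution of a^p + b^p + c^p = 0. Let 𝔓 be a prime ideal of O_K dividing 2 such that 𝔓 does not divide the ideal aO_K + bO_K + cO_K, and let j be the j-invariant of the Frey curve E: Y² = X(X − a^p)(X + b^p). Then ord_𝔓(j) < 0 (i.e., E has potentially multiplicative reduction at 𝔓) if and only if either the residue field of 𝔓 has 2 elements, or the residue field of 𝔓 has 4 elements and 𝔓 divides abc. Moreover, when ord_𝔓(j) < 0 one has ord_𝔓(j) = 8·ord_𝔓(2) − 2p·ord_𝔓(abc); in particular p does not divide ord_𝔓(j). -/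

import Mathlib

/-!
Write `t₂ = ord(2)`, `t = ord(abc)` and `s = ord(a^{2p} - bᵖcᵖ)`, so that
`ord j = 3(4t₂ + s) - (4t₂ + 2pt) = 8t₂ + 3s - 2pt`.

In a quadratic field `N(𝔓)^{t₂} ∣ N(2) = 4`, whence `N(𝔓) ∈ {2, 4}` and `1 ≤ t₂ ≤ 2`.
If `𝔓 ∣ abc`, exactly one of `a, b, c` lies in `𝔓` (two of them would force the third through
`aᵖ + bᵖ + cᵖ = 0`). Since `u² - vw` is symmetric in `u = aᵖ, v = bᵖ, w = cᵖ` when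
`u + v + w = 0`, it is then a `𝔓`-unit: `s = 0` and `ord j = 8t₂ - 2pt ≤ 16 - 2p < 0`, and
`p ∤ ord j` because `0 < 8t₂ < p`. If `𝔓 ∤ abc`, then `t = 0` and `ord j ≥ 0`, while the
residue field cannot be `𝔽₂`, where `aᵖ + bᵖ + cᵖ` would reduce to `1 + 1 + 1 ≠ 0`.
-/

open NumberField IsDedekindDomain

open scoped Classical in
/-- The normalized `v`-adic valuation `ord_v : K → ℤ ∪ {+∞}` on the fraction field `K`
of a Dedekind domain `R`, attached to a non-zero prime `v` of `R`; `ord_v (0) = +∞`. -/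
noncomputable def ordAt {R : Type*} [CommRing R] [IsDedekindDomain R] {K : Type*} [Field K]
    [Algebra R K] [IsFractionRing R K] (v : HeightOneSpectrum R) (x : K) : WithTop ℤ :=
  if hx : x = 0 then ⊤
  else ((-Multiplicative.toAdd (WithZero.unzero (((v.valuation K).ne_zero_iff).mpr hx)) : ℤ) : WithTop ℤ)

section OrdAt

variable {R : Type*} [CommRing R] [IsDedekindDomain R] {K : Type*} [Field K]
    [Algebra R K] [IsFractionRing R K] (v : HeightOneSpectrum R)

@[simp]
lemma ordAt_zero : ordAt v (0 : K) = ⊤ := by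
  simp [ordAt]

lemma ordAt_of_ne_zero {x : K} (hx : x ≠ 0) :
    ordAt v x = ((-WithZero.log (v.valuation K x) : ℤ) : WithTop ℤ) := by
  rw [ordAt, dif_neg hx, WithZero.toAdd_unzero_eq_log]

lemma ordAt_mul (x y : K) : ordAt v (x * y) = ordAt v x + ordAt v y := by
  rcases eq_or_ne x 0 with rfl | hx
  · simp
  rcases eq_or_ne y 0 with rfl | hy
  · simp
  have hvx : v.valuation K x ≠ 0 := (Valuation.ne_zero_iff _).mpr hx
  have hvy : v.valuation K y ≠ 0 := (Valuation.ne_zero_iff _).mpr hy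
  rw [ordAt_of_ne_zero v hx, ordAt_of_ne_zero v hy, ordAt_of_ne_zero v (mul_ne_zero hx hy),
    map_mul, WithZero.log_mul hvx hvy, ← WithTop.coe_add, neg_add]

lemma ordAt_pow (x : K) (n : ℕ) : ordAt v (x ^ n) = n • ordAt v x := by
  induction n with
  | zero => simp [ordAt_of_ne_zero v one_ne_zero]
  | succ n ih => rw [pow_succ, ordAt_mul, ih, succ_nsmul]

lemma ordAt_inv (x : K) : ordAt v x⁻¹ = -ordAt v x := by
  rcases eq_or_ne x 0 with rfl | hx
  · simp
  rw [ordAt_of_ne_zero v hx, ordAt_of_ne_zero v (inv_ne_zero hx), map_inv₀, WithZero.log_inv,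
    WithTop.LinearOrderedAddCommGroup.coe_neg]

lemma ordAt_div (x y : K) : ordAt v (x / y) = ordAt v x - ordAt v y := by
  rw [div_eq_mul_inv, ordAt_mul, ordAt_inv, sub_eq_add_neg]

lemma natCast_le_ordAt_algebraMap_iff (r : R) (n : ℕ) :
    ((n : ℤ) : WithTop ℤ) ≤ ordAt v (algebraMap R K r) ↔ v.asIdeal ^ n ∣ Ideal.span {r} := by
  rcases eq_or_ne r 0 with rfl | hr
  · simp
  have hr' : algebraMap R K r ≠ 0 := (map_ne_zero_iff _ (IsFractionRing.injective R K)).mpr hr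
  have hv : v.valuation K (algebraMap R K r) ≠ 0 := (Valuation.ne_zero_iff _).mpr hr'
  rw [← v.intValuation_le_pow_iff_dvd, ← v.valuation_of_algebraMap (K := K),
    ← WithZero.log_le_iff_le_exp hv, ordAt_of_ne_zero v hr']
  norm_cast
  omega

lemma exists_ordAt_algebraMap_eq_natCast {r : R} (hr : r ≠ 0) :
    ∃ n : ℕ, ordAt v (algebraMap R K r) = ((n : ℤ) : WithTop ℤ) := by
  have hr' : algebraMap R K r ≠ 0 := (map_ne_zero_iff _ (IsFractionRing.injective R K)).mpr hr
  have h0 := (natCast_le_ordAt_algebraMap_iff v (K := K) r 0).mpr (by simp)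
  rw [ordAt_of_ne_zero v hr'] at h0 ⊢
  exact ⟨(-WithZero.log (v.valuation K (algebraMap R K r))).toNat, by norm_cast at h0 ⊢; omega⟩

lemma pos_iff_mem_of_ordAt_algebraMap_eq {r : R} {n : ℕ}
    (h : ordAt v (algebraMap R K r) = ((n : ℤ) : WithTop ℤ)) : 0 < n ↔ r ∈ v.asIdeal := by
  rw [← Ideal.dvd_span_singleton, ← pow_one v.asIdeal, ← natCast_le_ordAt_algebraMap_iff v (K := K),
    h]
  norm_cast

lemma ordAt_algebraMap_eq_zero_of_notMem {r : R} (hr : r ∉ v.asIdeal) :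
    ordAt v (algebraMap R K r) = 0 := by
  obtain ⟨n, hn⟩ := exists_ordAt_algebraMap_eq_natCast v (K := K) (r := r)
    (fun h => hr (h ▸ zero_mem _))
  rw [hn, Nat.eq_zero_of_not_pos ((pos_iff_mem_of_ordAt_algebraMap_eq v hn).not.mpr hr)]
  rfl

end OrdAt

section FermatTriple

variable {R : Type*} [CommRing R] {P : Ideal R} [P.IsPrime] {n : ℕ} {a b c : R}

lemma notMem_of_add_pow_eq_zero (hn : n ≠ 0) (h : a ^ n + b ^ n + c ^ n = 0)
    (hP : ¬(a ∈ P ∧ b ∈ P ∧ c ∈ P)) (ha : a ∈ P) : b ∉ P := by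
  intro hb
  have hc : c ^ n ∈ P := by
    rw [show c ^ n = -(a ^ n + b ^ n) by linear_combination h]
    exact neg_mem (add_mem (P.pow_mem_of_mem ha n hn.bot_lt) (P.pow_mem_of_mem hb n hn.bot_lt))
  exact hP ⟨ha, hb, Ideal.IsPrime.mem_of_pow_mem ‹_› n hc⟩

lemma pow_two_mul_sub_notMem_of_mem (hn : n ≠ 0) (h : a ^ n + b ^ n + c ^ n = 0)
    (hP : ¬(a ∈ P ∧ b ∈ P ∧ c ∈ P)) (ha : a ∈ P) : a ^ (2 * n) - b ^ n * c ^ n ∉ P := by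
  have hb : b ∉ P := notMem_of_add_pow_eq_zero hn h hP ha
  have hc : c ∉ P :=
    notMem_of_add_pow_eq_zero (b := c) (c := b) hn (by linear_combination h) (by tauto) ha
  intro hmem
  have hbc : b ^ n * c ^ n ∈ P := by
    rw [show b ^ n * c ^ n = a ^ (2 * n) - (a ^ (2 * n) - b ^ n * c ^ n) by ring]
    exact sub_mem (P.pow_mem_of_mem ha _ (by omega)) hmem
  rcases Ideal.IsPrime.mem_or_mem ‹_› hbc with hb' | hc'
  · exact hb (Ideal.IsPrime.mem_of_pow_mem ‹_› n hb')
  · exact hc (Ideal.IsPrime.mem_of_pow_mem ‹_› n hc')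

lemma pow_two_mul_sub_notMem (hn : n ≠ 0) (h : a ^ n + b ^ n + c ^ n = 0)
    (hP : ¬(a ∈ P ∧ b ∈ P ∧ c ∈ P)) (habc : a * b * c ∈ P) :
    a ^ (2 * n) - b ^ n * c ^ n ∉ P := by
  rcases Ideal.IsPrime.mem_or_mem ‹_› habc with hab | hc
  · rcases Ideal.IsPrime.mem_or_mem ‹_› hab with ha | hb
    · exact pow_two_mul_sub_notMem_of_mem hn h hP ha
    · rw [show a ^ (2 * n) - b ^ n * c ^ n = b ^ (2 * n) - c ^ n * a ^ n by
        linear_combination (a ^ n - b ^ n) * h]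
      exact pow_two_mul_sub_notMem_of_mem hn (by linear_combination h) (by tauto) hb
  · rw [show a ^ (2 * n) - b ^ n * c ^ n = c ^ (2 * n) - a ^ n * b ^ n by
      linear_combination (a ^ n - c ^ n) * h]
    exact pow_two_mul_sub_notMem_of_mem hn (by linear_combination h) (by tauto) hc

end FermatTriple

lemma mul_mem_of_natCard_quotient_eq_two {R : Type*} [CommRing R] {P : Ideal R} [P.IsMaximal]
    (hP : Nat.card (R ⧸ P) = 2) {n : ℕ} {a b c : R} (h : a ^ n + b ^ n + c ^ n = 0) :
    a * b * c ∈ P := by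
  let := Ideal.Quotient.field P
  have : Fintype (R ⧸ P) := @Fintype.ofFinite _ (Nat.finite_of_card_ne_zero (by omega))
  rw [Nat.card_eq_fintype_card] at hP
  have h_one : ∀ x : R ⧸ P, x ≠ 0 → x = 1 := fun x hx => by
    simpa [hP] using FiniteField.pow_card_sub_one_eq_one x hx
  have h_two : (2 : R ⧸ P) = 0 := by exact_mod_cast hP ▸ FiniteField.cast_card_eq_zero (R ⧸ P)
  by_contra habc
  simp only [← Ideal.Quotient.eq_zero_iff_mem, map_mul, mul_ne_zero_iff] at habc
  have := congrArg (Ideal.Quotient.mk P) h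
  simp only [map_add, map_pow, map_zero, h_one _ habc.1.1, h_one _ habc.1.2, h_one _ habc.2,
    one_pow] at this
  exact one_ne_zero (by linear_combination this - h_two : (1 : R ⧸ P) = 0)

lemma natCard_quotient_pow_dvd_absNorm {S : Type*} [CommRing S] [IsDedekindDomain S]
    [Module.Free ℤ S] [Module.Finite ℤ S] {K : Type*} [Field K] [Algebra S K]
    [IsFractionRing S K] (v : HeightOneSpectrum S) {r : S} {n : ℕ}
    (h : ((n : ℤ) : WithTop ℤ) ≤ ordAt v (algebraMap S K r)) :
    Nat.card (S ⧸ v.asIdeal) ^ n ∣ Ideal.absNorm (Ideal.span {r}) := by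
  rw [← Submodule.cardQuot_apply, ← Ideal.absNorm_apply, ← map_pow]
  exact Ideal.absNorm_dvd_absNorm_of_le
    (Ideal.le_of_dvd ((natCast_le_ordAt_algebraMap_iff v r n).mp h))

lemma absNorm_span_two_of_finrank_eq_two {K : Type*} [Field K] [NumberField K]
    (hdeg : Module.finrank ℚ K = 2) : Ideal.absNorm (Ideal.span {(2 : 𝓞 K)}) = 4 := by
  have := Ideal.absNorm_span_natCast (S := 𝓞 K) 2
  rwa [RingOfIntegers.rank, hdeg, Nat.cast_ofNat] at this

lemma eq_two_or_four_and_le_two_of_pow_dvd_four {N t : ℕ} (hN : N ≠ 1) (ht : t ≠ 0)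
    (h : N ^ t ∣ 4) : (N = 2 ∨ N = 4) ∧ t ≤ 2 := by
  have hN4 : N ∣ 4 := (dvd_pow_self N ht).trans h
  have hN_le : N ≤ 4 := Nat.le_of_dvd (by norm_num) hN4
  have hN_cases : N = 2 ∨ N = 4 := by interval_cases N <;> simp_all
  refine ⟨hN_cases, (Nat.pow_le_pow_iff_right (by norm_num : 1 < 2)).mp ?_⟩
  calc 2 ^ t ≤ N ^ t := Nat.pow_le_pow_left (by omega) t
    _ ≤ 2 ^ 2 := Nat.le_of_dvd (by norm_num) h

section FreyCurve

variable {R : Type*} [CommRing R] [IsDedekindDomain R] {K : Type*} [Field K]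
    [Algebra R K] [IsFractionRing R K] (v : HeightOneSpectrum R) {p : ℕ} {a b c : R} {j : K}

lemma ordAt_freyJ (hj : j = (algebraMap R K (16 * (a ^ (2 * p) - b ^ p * c ^ p))) ^ 3 /
      algebraMap R K (16 * a ^ (2 * p) * b ^ (2 * p) * c ^ (2 * p))) :
    ordAt v j = 3 • (4 • ordAt v (algebraMap R K 2) +
        ordAt v (algebraMap R K (a ^ (2 * p) - b ^ p * c ^ p))) -
      (4 • ordAt v (algebraMap R K 2) + (2 * p) • ordAt v (algebraMap R K (a * b * c))) := by
  rw [hj, show (16 : R) = 2 ^ 4 by norm_num,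
    show (2 : R) ^ 4 * a ^ (2 * p) * b ^ (2 * p) * c ^ (2 * p) = 2 ^ 4 * (a * b * c) ^ (2 * p) by
      ring]
  simp only [map_mul, map_pow, ordAt_div, ordAt_mul, ordAt_pow]

lemma ordAt_freyJ_eq_of_notMem
    (hj : j = (algebraMap R K (16 * (a ^ (2 * p) - b ^ p * c ^ p))) ^ 3 /
      algebraMap R K (16 * a ^ (2 * p) * b ^ (2 * p) * c ^ (2 * p)))
    {t₂ t : ℕ} (ht₂ : ordAt v (algebraMap R K 2) = (t₂ : ℤ))
    (ht : ordAt v (algebraMap R K (a * b * c)) = (t : ℤ))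
    (hc₄ : a ^ (2 * p) - b ^ p * c ^ p ∉ v.asIdeal) :
    ordAt v j = ((8 * (t₂ : ℤ) - 2 * p * t : ℤ) : WithTop ℤ) := by
  rw [ordAt_freyJ v hj, ht₂, ht, ordAt_algebraMap_eq_zero_of_notMem v hc₄, ← WithTop.coe_zero]
  simp only [← WithTop.coe_nsmul, ← WithTop.coe_add, ← WithTop.LinearOrderedAddCommGroup.coe_sub,
    WithTop.coe_inj, nsmul_eq_mul]
  push_cast
  ring

lemma ordAt_freyJ_nonneg (hj : j = (algebraMap R K (16 * (a ^ (2 * p) - b ^ p * c ^ p))) ^ 3 /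
      algebraMap R K (16 * a ^ (2 * p) * b ^ (2 * p) * c ^ (2 * p)))
    {t₂ : ℕ} (ht₂ : ordAt v (algebraMap R K 2) = (t₂ : ℤ)) (habc : a * b * c ∉ v.asIdeal) :
    0 ≤ ordAt v j := by
  rcases eq_or_ne (a ^ (2 * p) - b ^ p * c ^ p) 0 with hc₄ | hc₄
  · simp [hj, hc₄]
  obtain ⟨s, hs⟩ := exists_ordAt_algebraMap_eq_natCast v (K := K) hc₄
  rw [ordAt_freyJ v hj, ht₂, hs, ordAt_algebraMap_eq_zero_of_notMem v habc, ← WithTop.coe_zero]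
  simp only [← WithTop.coe_nsmul, ← WithTop.coe_add, ← WithTop.LinearOrderedAddCommGroup.coe_sub,
    WithTop.coe_le_coe, nsmul_eq_mul]
  omega

end FreyCurve

theorem frey_curve_potentially_multiplicative_at_two_general (K : Type*) [Field K] [NumberField K]
    (hdeg : Module.finrank ℚ K = 2)
    (p : ℕ) (hp17 : 17 ≤ p)
    (a b c : 𝓞 K) (habc : a * b * c ≠ 0) (hfermat : a ^ p + b ^ p + c ^ p = 0)
    (v : HeightOneSpectrum (𝓞 K)) (hv2 : (2 : 𝓞 K) ∈ v.asIdeal)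
    (hndvd : ¬ v.asIdeal ∣ Ideal.span ({a, b, c} : Set (𝓞 K)))
    (j : K) (hj : j = (algebraMap (𝓞 K) K (16 * (a ^ (2 * p) - b ^ p * c ^ p))) ^ 3 /
      algebraMap (𝓞 K) K (16 * a ^ (2 * p) * b ^ (2 * p) * c ^ (2 * p))) :
    (ordAt v j < 0 ↔
      Nat.card (𝓞 K ⧸ v.asIdeal) = 2 ∨
      (Nat.card (𝓞 K ⧸ v.asIdeal) = 4 ∧ a * b * c ∈ v.asIdeal)) ∧
    (ordAt v j < 0 →
      ∃ t₂ t : ℤ, ordAt v (algebraMap (𝓞 K) K 2) = t₂ ∧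
        ordAt v (algebraMap (𝓞 K) K (a * b * c)) = t ∧
        ordAt v j = ((8 * t₂ - 2 * p * t : ℤ) : WithTop ℤ) ∧
        ¬ ((p : ℤ) ∣ 8 * t₂ - 2 * p * t)) := by
  have hcop : ¬(a ∈ v.asIdeal ∧ b ∈ v.asIdeal ∧ c ∈ v.asIdeal) := fun h =>
    hndvd (Ideal.dvd_iff_le.mpr (by simp [Ideal.span_le, Set.insert_subset_iff, h]))
  obtain ⟨t₂, ht₂⟩ := exists_ordAt_algebraMap_eq_natCast v (K := K) (two_ne_zero : (2 : 𝓞 K) ≠ 0)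
  obtain ⟨t, ht⟩ := exists_ordAt_algebraMap_eq_natCast v (K := K) habc
  have ht₂_pos : 0 < t₂ := (pos_iff_mem_of_ordAt_algebraMap_eq v ht₂).mpr hv2
  have hcard_ne_one : Nat.card (𝓞 K ⧸ v.asIdeal) ≠ 1 := by
    have := Ideal.Quotient.nontrivial_iff.mpr v.isMaximal.ne_top
    exact fun h => not_subsingleton _ (Nat.card_eq_one_iff_unique.mp h).1
  obtain ⟨hcard, ht₂_le⟩ := eq_two_or_four_and_le_two_of_pow_dvd_four hcard_ne_one ht₂_pos.ne'
    (absNorm_span_two_of_finrank_eq_two hdeg ▸ natCard_quotient_pow_dvd_absNorm v ht₂.ge)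
  by_cases hmem : a * b * c ∈ v.asIdeal
  · have ht_pos : 0 < t := (pos_iff_mem_of_ordAt_algebraMap_eq v ht).mpr hmem
    have hord := ordAt_freyJ_eq_of_notMem v hj ht₂ ht
      (pow_two_mul_sub_notMem (by omega) hfermat hcop hmem)
    have hneg : ordAt v j < 0 := by
      rw [hord]
      exact_mod_cast (by nlinarith : 8 * (t₂ : ℤ) - 2 * p * t < 0)
    refine ⟨iff_of_true hneg (by tauto), fun _ => ⟨t₂, t, ht₂, ht, hord, ?_⟩⟩
    rw [dvd_sub_left (dvd_mul_of_dvd_left (dvd_mul_left _ _) _)]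
    exact fun h => absurd (Int.le_of_dvd (by omega) h) (by omega)
  · have hnonneg := (ordAt_freyJ_nonneg v hj ht₂ hmem).not_gt
    have hcard2 : Nat.card (𝓞 K ⧸ v.asIdeal) ≠ 2 := fun h =>
      hmem (mul_mem_of_natCard_quotient_eq_two h hfermat)
    exact ⟨iff_of_false hnonneg (by tauto), fun h => absurd h hnonneg⟩

/-- **Potentially multiplicative reduction of the Frey curve at primes above 2 (Lemma 4.2).**
Let `K` be a quadratic number field, `p ≥ 17` a prime, `(a, b, c)` a non-trivial solution
of `a ^ p + b ^ p + c ^ p = 0` in `𝓞 K`, and `𝔓 ∣ 2` a prime of `𝓞 K` not dividing the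
ideal `(a, b, c)`. Let `j = c₄³/Δ` be the `j`-invariant of the Frey curve
`Y² = X(X − aᵖ)(X + bᵖ)`. Then `ord_𝔓(j) < 0` if and only if the residue field of `𝔓`
has `2` elements, or it has `4` elements and `𝔓 ∣ abc`. Moreover, if `ord_𝔓(j) < 0`,
then `ord_𝔓(j) = 8 ord_𝔓(2) − 2p · ord_𝔓(abc)`; in particular `p ∤ ord_𝔓(j)`. -/
theorem frey_curve_potentially_multiplicative_at_two (K : Type*) [Field K] [NumberField K]
    (hdeg : Module.finrank ℚ K = 2)
    (p : ℕ) (hp : p.Prime) (hp17 : 17 ≤ p)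
    (a b c : 𝓞 K) (habc : a * b * c ≠ 0) (hfermat : a ^ p + b ^ p + c ^ p = 0)
    (v : HeightOneSpectrum (𝓞 K)) (hv2 : (2 : 𝓞 K) ∈ v.asIdeal)
    (hndvd : ¬ v.asIdeal ∣ Ideal.span ({a, b, c} : Set (𝓞 K)))
    (j : K) (hj : j = (algebraMap (𝓞 K) K (16 * (a ^ (2 * p) - b ^ p * c ^ p))) ^ 3 /
      algebraMap (𝓞 K) K (16 * a ^ (2 * p) * b ^ (2 * p) * c ^ (2 * p))) :
    (ordAt v j < 0 ↔
      Nat.card (𝓞 K ⧸ v.asIdeal) = 2 ∨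
      (Nat.card (𝓞 K ⧸ v.asIdeal) = 4 ∧ a * b * c ∈ v.asIdeal)) ∧
    (ordAt v j < 0 →
      ∃ t₂ t : ℤ, ordAt v (algebraMap (𝓞 K) K 2) = t₂ ∧
        ordAt v (algebraMap (𝓞 K) K (a * b * c)) = t ∧
        ordAt v j = ((8 * t₂ - 2 * p * t : ℤ) : WithTop ℤ) ∧
        ¬ ((p : ℤ) ∣ 8 * t₂ - 2 * p * t)) :=
  frey_curve_potentially_multiplicative_at_two_general K hdeg p hp17 a b c habc hfermat v hv2 hndvd
    j hj
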